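/- arXiv:2107.13747 — 7 statements merged into one kernel-verified Lean document; each statement's English description precedes it below -/
import Mathlib

section
/- Let (G, H, τ, α) be a crossed module and consider the associated 2-group. Suppose k₂ = (a₂, b₂) and k₂' = (a₂', b₂') are composable (b₂ = τ(a₂') * b₂') and k₁ = (a₁, b₁) and k₁' = (a₁', b₁') are composable (b₁ = τ(a₁') * b₁') in H ⋊_α G. Then the semidirect products k₂ * k₁ and k₂' * k₁' are composable, and the interchange law holds: (k₂ * k₁) ∘ (k₂' * k₁') = (k₂ ∘ k₂') * (k₁ ∘ k₁'). -/
set_option autoImplicit false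

/-- Groupoid composition of morphisms of the 2-group associated to a crossed module:
`(h₂, g₂) ∘ (h₁, g₁) = (h₂ * h₁, g₁)` (defined when `g₂ = τ h₁ * g₁`). -/
def gcomp {G H : Type*} [Group G] [Group H] (α : G →* MulAut H)
    (k₂ k₁ : H ⋊[α] G) : H ⋊[α] G :=
  ⟨k₂.left * k₁.left, k₁.right⟩

/-- In the 2-group associated to a crossed module `(G, H, τ, α)`, if
`k₂, k₂'` are composable (`s k₂ = t k₂'`) and `k₁, k₁'` are composable, then the
semidirect products `k₂ * k₁` and `k₂' * k₁'` are composable, and the interchange law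
holds: `(k₂ * k₁) ∘ (k₂' * k₁') = (k₂ ∘ k₂') * (k₁ ∘ k₁')`. -/
theorem statement2 {G H : Type*} [Group G] [Group H]
    (τ : H →* G) (α : G →* MulAut H)
    (peiffer1 : ∀ (g : G) (h : H), τ (α g h) = g * τ h * g⁻¹)
    (peiffer2 : ∀ h h' : H, α (τ h) h' = h * h' * h⁻¹)
    (k₂ k₂' k₁ k₁' : H ⋊[α] G)
    (hc₂ : k₂.right = τ k₂'.left * k₂'.right)
    (hc₁ : k₁.right = τ k₁'.left * k₁'.right) :
    ((k₂ * k₁).right = τ (k₂' * k₁').left * (k₂' * k₁').right) ∧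
      gcomp α (k₂ * k₁) (k₂' * k₁') = gcomp α k₂ k₂' * gcomp α k₁ k₁' := by
  constructor
  · simp only [SemidirectProduct.mul_right, SemidirectProduct.mul_left, map_mul,
      peiffer1, hc₂, hc₁]
    group
  · ext
    · simp only [gcomp, SemidirectProduct.mul_left, hc₂, map_mul, MulAut.mul_apply,
        peiffer2]
      group
    · simp [gcomp]
end

section
/- Let (G₁, G₀, s, t, u, c) be a 2-group datum as in the context. Then (G₀, ker s, t restricted to ker s, conjugation by units) is a crossed module: for every g ∈ G₀ the map a ↦ u(g) * a * u(g)⁻¹ sends ker s to ker s and defines an action of G₀ on ker s by group automorphisms; t(u(g) * a * u(g)⁻¹) = g * t(a) * g⁻¹ for all g ∈ G₀ and a ∈ ker s; and for all a, b ∈ ker s the second Peiffer identity holds: u(t(a)) * b * u(t(a))⁻¹ = a * b * a⁻¹. -/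
set_option autoImplicit false

/-- Let `(G₁, G₀, s, t, u, c)` be a 2-group datum. Then
`(G₀, ker s, t|_{ker s}, conjugation by units)` is a crossed module: conjugation by
`u g` preserves `ker s` and defines an action of `G₀` on `ker s` by group
automorphisms; `t (u g * a * (u g)⁻¹) = g * t a * g⁻¹` for `a ∈ ker s`; and the second
Peiffer identity `u (t a) * b * (u (t a))⁻¹ = a * b * a⁻¹` holds for `a, b ∈ ker s`. -/
theorem statement7 {G₁ G₀ : Type*} [Group G₁] [Group G₀]
    (s t : G₁ →* G₀) (u : G₀ →* G₁)
    (hsu : ∀ g : G₀, s (u g) = g) (htu : ∀ g : G₀, t (u g) = g)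
    (c : G₁ → G₁ → G₁)
    (hs : ∀ k₂ k₁ : G₁, s k₂ = t k₁ → s (c k₂ k₁) = s k₁)
    (ht : ∀ k₂ k₁ : G₁, s k₂ = t k₁ → t (c k₂ k₁) = t k₂)
    (unit_right : ∀ k : G₁, c k (u (s k)) = k)
    (unit_left : ∀ k : G₁, c (u (t k)) k = k)
    (interchange : ∀ k₂ k₁ k₂' k₁' : G₁, s k₂ = t k₁ → s k₂' = t k₁' →
      c k₂ k₁ * c k₂' k₁' = c (k₂ * k₂') (k₁ * k₁')) :
    -- conjugation by `u g` sends `ker s` to `ker s`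
    (∀ (g : G₀) (a : G₁), s a = 1 → s (u g * a * (u g)⁻¹) = 1) ∧
    -- it defines an action of `G₀` …
    (∀ a : G₁, s a = 1 → u (1 : G₀) * a * (u (1 : G₀))⁻¹ = a) ∧
    (∀ (g g' : G₀) (a : G₁), s a = 1 →
      u (g * g') * a * (u (g * g'))⁻¹ = u g * (u g' * a * (u g')⁻¹) * (u g)⁻¹) ∧
    -- … by group automorphisms
    (∀ (g : G₀) (a b : G₁), s a = 1 → s b = 1 →
      u g * (a * b) * (u g)⁻¹ = (u g * a * (u g)⁻¹) * (u g * b * (u g)⁻¹)) ∧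
    -- first Peiffer identity
    (∀ (g : G₀) (a : G₁), s a = 1 → t (u g * a * (u g)⁻¹) = g * t a * g⁻¹) ∧
    -- second Peiffer identity
    (∀ a b : G₁, s a = 1 → s b = 1 →
      u (t a) * b * (u (t a))⁻¹ = a * b * a⁻¹) := by

  have hu1 : u (1 : G₀) = 1 := map_one u
  refine ⟨?_, ?_, ?_, ?_, ?_, ?_⟩
  · intro g a ha; simp [hsu, ha]
  · intro a ha; simp [hu1]
  · intro g g' a ha; simp [map_mul, mul_assoc]
  · intro g a b ha hb; group
  · intro g a ha; simp [htu]
  · intro a b ha hb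
    have key1 : ∀ x y : G₁, s x = 1 → x * y = c (x * u (t y)) y := by
      intro x y hx
      have h := interchange x (u (s x)) (u (t y)) y (htu (s x)).symm (hsu (t y))
      rw [unit_right, unit_left, hx, hu1, one_mul] at h
      exact h
    have key2 : ∀ x y : G₁, s y = 1 → x * y = c (u (t x) * y) x := by
      intro x y hy
      have h := interchange (u (t x)) x y (u (s y)) (hsu (t x)) (htu (s y)).symm
      rw [unit_left, unit_right, hy, hu1, mul_one] at h
      exact h
    have hb' : s (u (t a) * b * (u (t a))⁻¹) = 1 := by simp [hsu, hb]
    have e1 : (u (t a) * b * (u (t a))⁻¹) * a = c (u (t a) * b) a := by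
      have h := key1 _ a hb'
      rw [h]; congr 1; group
    have e2 : a * b = c (u (t a) * b) a := key2 a b hb
    exact eq_mul_inv_of_mul_eq (e1.trans e2.symm)
end

section
/- In the decorated groupoid setting of the context, the target map is equivariant: for every morphism (γ, p, h) of the decorated groupoid and every (h', g) ∈ H ⋊_α G, the target of (γ, p, h) · (h', g) = (γ, p · g, α(g⁻¹)(h'⁻¹ * h)) equals (target of (γ, p, h)) · (τ(h') * g); explicitly, μ(γ, p · g) · τ(α(g⁻¹)(h'⁻¹ * h))⁻¹ = (μ(γ, p) · τ(h)⁻¹) · (τ(h') * g). -/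
set_option autoImplicit false

universe u v w

/-- A small groupoid with object type `M`, given by hom-sets, identities, a composition
(the arrow written on the right is applied first) and inverses. -/
structure SmallGroupoid (M : Type u) where
  Hom : M → M → Type v
  id : ∀ x : M, Hom x x
  comp : ∀ {x y z : M}, Hom y z → Hom x y → Hom x z
  inv : ∀ {x y : M}, Hom x y → Hom y x
  comp_id : ∀ {x y : M} (f : Hom x y), comp f (id x) = f
  id_comp : ∀ {x y : M} (f : Hom x y), comp (id y) f = f
  assoc : ∀ {w x y z : M} (f : Hom y z) (g : Hom x y) (h : Hom w x),
    comp (comp f g) h = comp f (comp g h)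
  inv_comp : ∀ {x y : M} (f : Hom x y), comp (inv f) f = id x
  comp_inv : ∀ {x y : M} (f : Hom x y), comp f (inv f) = id y

/-- In the decorated groupoid setting, the target map is equivariant:
for every morphism `(γ, p, h)` of the decorated groupoid and every
`(h', g) ∈ H ⋊_α G`, the target of
`(γ, p, h) · (h', g) = (γ, p · g, α (g⁻¹) (h'⁻¹ * h))` equals
`(target of (γ, p, h)) · (τ h' * g)`; explicitly,
`μ (γ, p · g) · τ(α (g⁻¹) (h'⁻¹ * h))⁻¹ = (μ (γ, p) · τ(h)⁻¹) · (τ h' * g)`. -/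
theorem statement15
    {G H : Type*} [Group G] [Group H]
    (τ : H →* G) (α : G →* MulAut H)
    (peiffer1 : ∀ (g : G) (h : H), τ (α g h) = g * τ h * g⁻¹)
    (peiffer2 : ∀ h h' : H, α (τ h) h' = h * h' * h⁻¹)
    {X₀ : Type u} (𝕏 : SmallGroupoid.{u, v} X₀)
    {E : Type w} (π : E → X₀)
    (act : E → G → E)
    (act_one : ∀ p : E, act p 1 = p)
    (act_mul : ∀ (p : E) (g g' : G), act (act p g) g' = act p (g * g'))
    (π_act : ∀ (p : E) (g : G), π (act p g) = π p)
    (μ : ∀ {x y : X₀}, 𝕏.Hom x y → E → E)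
    (π_μ : ∀ {x y : X₀} (γ : 𝕏.Hom x y) (p : E), π p = x → π (μ γ p) = y)
    (μ_id : ∀ (x : X₀) (p : E), π p = x → μ (𝕏.id x) p = p)
    (μ_comp : ∀ {x y z : X₀} (γ₂ : 𝕏.Hom y z) (γ₁ : 𝕏.Hom x y) (p : E),
      π p = x → μ (𝕏.comp γ₂ γ₁) p = μ γ₂ (μ γ₁ p))
    (μ_act : ∀ {x y : X₀} (γ : 𝕏.Hom x y) (p : E) (g : G),
      π p = x → μ γ (act p g) = act (μ γ p) g)
    {x y : X₀} (γ : 𝕏.Hom x y) (p : E) (h h' : H) (g : G)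
    (hp : π p = x) :
    act (μ γ (act p g)) ((τ (α g⁻¹ (h'⁻¹ * h)))⁻¹)
      = act (act (μ γ p) ((τ h)⁻¹)) (τ h' * g) := by
  rw [μ_act γ p g hp, act_mul, act_mul, peiffer1]
  congr 1
  simp [mul_assoc]
end

section
/- In the decorated groupoid setting of the context, define ĩ(γ, p, h) := (γ⁻¹, μ(γ, p) · τ(h⁻¹), h⁻¹). Then ĩ(γ, p, h) is a valid morphism of the decorated groupoid whose source is the target of (γ, p, h) and whose target is p; the composite ĩ(γ, p, h) ∘ (γ, p, h) is defined and equals the identity morphism (1_{π(p)}, p, e_H) at p; and the composite (γ, p, h) ∘ ĩ(γ, p, h) is defined and equals the identity morphism at μ(γ, p) · τ(h⁻¹). -/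
set_option autoImplicit false

universe u v w

/-- In the decorated groupoid setting, define
`ĩ (γ, p, h) := (γ⁻¹, μ (γ, p) · τ (h⁻¹), h⁻¹)`. Then `ĩ (γ, p, h)` is a valid
morphism of the decorated groupoid whose source is the target of `(γ, p, h)` and
whose target is `p`; the composite `ĩ (γ, p, h) ∘ (γ, p, h)` is defined and equals the
identity morphism `(1_{π p}, p, e_H)` at `p`; and the composite
`(γ, p, h) ∘ ĩ (γ, p, h)` is defined and equals the identity morphism at
`μ (γ, p) · τ (h⁻¹)`.  (Morphisms are triples, so the equalities of composites are
stated componentwise; the object components are definitionally equal.) -/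
theorem statement16
    {G H : Type*} [Group G] [Group H]
    (τ : H →* G) (α : G →* MulAut H)
    (peiffer1 : ∀ (g : G) (h : H), τ (α g h) = g * τ h * g⁻¹)
    (peiffer2 : ∀ h h' : H, α (τ h) h' = h * h' * h⁻¹)
    {X₀ : Type u} (𝕏 : SmallGroupoid.{u, v} X₀)
    {E : Type w} (π : E → X₀)
    (act : E → G → E)
    (act_one : ∀ p : E, act p 1 = p)
    (act_mul : ∀ (p : E) (g g' : G), act (act p g) g' = act p (g * g'))
    (π_act : ∀ (p : E) (g : G), π (act p g) = π p)
    (μ : ∀ {x y : X₀}, 𝕏.Hom x y → E → E)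
    (π_μ : ∀ {x y : X₀} (γ : 𝕏.Hom x y) (p : E), π p = x → π (μ γ p) = y)
    (μ_id : ∀ (x : X₀) (p : E), π p = x → μ (𝕏.id x) p = p)
    (μ_comp : ∀ {x y z : X₀} (γ₂ : 𝕏.Hom y z) (γ₁ : 𝕏.Hom x y) (p : E),
      π p = x → μ (𝕏.comp γ₂ γ₁) p = μ γ₂ (μ γ₁ p))
    (μ_act : ∀ {x y : X₀} (γ : 𝕏.Hom x y) (p : E) (g : G),
      π p = x → μ γ (act p g) = act (μ γ p) g)
    {x y : X₀} (γ : 𝕏.Hom x y) (p : E) (h : H) (hp : π p = x) :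
    -- `ĩ (γ, p, h)` is a valid morphism: its point lies in the fiber over the source
    -- `y` of `γ⁻¹` (and its source is the target of `(γ, p, h)` by definition)
    π (act (μ γ p) (τ h⁻¹)) = y ∧
    -- the target of `ĩ (γ, p, h)` is `p`
    act (μ (𝕏.inv γ) (act (μ γ p) (τ h⁻¹))) (τ (h⁻¹⁻¹)) = p ∧
    -- `ĩ (γ, p, h) ∘ (γ, p, h) = (1_{π p}, p, e_H)`, componentwise
    𝕏.comp (𝕏.inv γ) γ = 𝕏.id x ∧ h⁻¹ * h = 1 ∧
    -- `(γ, p, h) ∘ ĩ (γ, p, h)` is the identity at `μ (γ, p) · τ (h⁻¹)`, componentwise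
    𝕏.comp γ (𝕏.inv γ) = 𝕏.id y ∧ h * h⁻¹ = 1 := by
  have hμ : π (μ γ p) = y := π_μ γ p hp
  refine ⟨by rw [π_act, hμ], ?_, 𝕏.inv_comp γ, inv_mul_cancel h, 𝕏.comp_inv γ, mul_inv_cancel h⟩
  rw [μ_act (𝕏.inv γ) (μ γ p) (τ h⁻¹) hμ, ← μ_comp (𝕏.inv γ) γ p hp, 𝕏.inv_comp, μ_id x p hp,
    act_mul, ← map_mul, mul_inv_cancel, map_one, act_one]
end

section
/- In the decorated groupoid setting of the context, the composition is well-defined and associative: (a) if (γ₂, p₂, h₂) and (γ₁, p₁, h₁) are composable (p₂ = μ(γ₁, p₁) · τ(h₁⁻¹)), then the source of their composite (γ₂ ∘ γ₁, p₁, h₂ * h₁) equals the source p₁ of (γ₁, p₁, h₁) and its target μ(γ₂ ∘ γ₁, p₁) · τ((h₂ * h₁)⁻¹) equals the target μ(γ₂, p₂) · τ(h₂⁻¹) of (γ₂, p₂, h₂); (b) for three consecutively composable morphisms the two iterated composites agree. -/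
set_option autoImplicit false

universe u v w

/-- In the decorated groupoid setting, the composition is
well-defined and associative: (a) if `(γ₂, p₂, h₂)` and `(γ₁, p₁, h₁)` are composable
(`p₂ = μ (γ₁, p₁) · τ (h₁⁻¹)`), then the source of the composite
`(γ₂ ∘ γ₁, p₁, h₂ * h₁)` is `p₁` (definitionally) and its target
`μ (γ₂ ∘ γ₁, p₁) · τ ((h₂ * h₁)⁻¹)` equals the target `μ (γ₂, p₂) · τ (h₂⁻¹)` of
`(γ₂, p₂, h₂)`; (b) for three consecutively composable morphisms the two iterated
composites agree (componentwise; in particular the third morphism is composable with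
the composite of the first two). -/
theorem statement17
    {G H : Type*} [Group G] [Group H]
    (τ : H →* G) (α : G →* MulAut H)
    (peiffer1 : ∀ (g : G) (h : H), τ (α g h) = g * τ h * g⁻¹)
    (peiffer2 : ∀ h h' : H, α (τ h) h' = h * h' * h⁻¹)
    {X₀ : Type u} (𝕏 : SmallGroupoid.{u, v} X₀)
    {E : Type w} (π : E → X₀)
    (act : E → G → E)
    (act_one : ∀ p : E, act p 1 = p)
    (act_mul : ∀ (p : E) (g g' : G), act (act p g) g' = act p (g * g'))
    (π_act : ∀ (p : E) (g : G), π (act p g) = π p)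
    (μ : ∀ {x y : X₀}, 𝕏.Hom x y → E → E)
    (π_μ : ∀ {x y : X₀} (γ : 𝕏.Hom x y) (p : E), π p = x → π (μ γ p) = y)
    (μ_id : ∀ (x : X₀) (p : E), π p = x → μ (𝕏.id x) p = p)
    (μ_comp : ∀ {x y z : X₀} (γ₂ : 𝕏.Hom y z) (γ₁ : 𝕏.Hom x y) (p : E),
      π p = x → μ (𝕏.comp γ₂ γ₁) p = μ γ₂ (μ γ₁ p))
    (μ_act : ∀ {x y : X₀} (γ : 𝕏.Hom x y) (p : E) (g : G),
      π p = x → μ γ (act p g) = act (μ γ p) g) :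
    -- (a) source/target of the composite of a composable pair
    (∀ (x y z : X₀) (γ₂ : 𝕏.Hom y z) (γ₁ : 𝕏.Hom x y) (p₂ p₁ : E) (h₂ h₁ : H),
      π p₁ = x → p₂ = act (μ γ₁ p₁) (τ h₁⁻¹) →
      act (μ (𝕏.comp γ₂ γ₁) p₁) (τ ((h₂ * h₁)⁻¹)) = act (μ γ₂ p₂) (τ h₂⁻¹)) ∧
    -- (b) associativity for three consecutively composable morphisms
    (∀ (w x y z : X₀) (γ₃ : 𝕏.Hom y z) (γ₂ : 𝕏.Hom x y) (γ₁ : 𝕏.Hom w x)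
        (p₃ p₂ p₁ : E) (h₃ h₂ h₁ : H),
      π p₁ = w → p₂ = act (μ γ₁ p₁) (τ h₁⁻¹) → p₃ = act (μ γ₂ p₂) (τ h₂⁻¹) →
      p₃ = act (μ (𝕏.comp γ₂ γ₁) p₁) (τ ((h₂ * h₁)⁻¹)) ∧
      𝕏.comp (𝕏.comp γ₃ γ₂) γ₁ = 𝕏.comp γ₃ (𝕏.comp γ₂ γ₁) ∧
      (h₃ * h₂) * h₁ = h₃ * (h₂ * h₁)) := by
  have key : ∀ (x y z : X₀) (γ₂ : 𝕏.Hom y z) (γ₁ : 𝕏.Hom x y) (p₂ p₁ : E) (h₂ h₁ : H),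
      π p₁ = x → p₂ = act (μ γ₁ p₁) (τ h₁⁻¹) →
      act (μ (𝕏.comp γ₂ γ₁) p₁) (τ ((h₂ * h₁)⁻¹)) = act (μ γ₂ p₂) (τ h₂⁻¹) := by
    intro x y z γ₂ γ₁ p₂ p₁ h₂ h₁ hπ hp₂
    have hπ₂ : π (μ γ₁ p₁) = y := π_μ γ₁ p₁ hπ
    rw [hp₂, μ_act γ₂ _ _ hπ₂, act_mul, μ_comp γ₂ γ₁ p₁ hπ,
        mul_inv_rev, map_mul]
  refine ⟨key, ?_⟩
  intro w x y z γ₃ γ₂ γ₁ p₃ p₂ p₁ h₃ h₂ h₁ hπ hp₂ hp₃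
  exact ⟨by rw [hp₃, key w x y γ₂ γ₁ p₂ p₁ h₂ h₁ hπ hp₂],
    𝕏.assoc γ₃ γ₂ γ₁, mul_assoc h₃ h₂ h₁⟩
end

section
/- In the decorated groupoid setting of the context, let β : E → H be a map satisfying β(p · g) = α(g⁻¹)(β(p)) for all p ∈ E, g ∈ G, and define 𝒞(γ, p) := (γ, p, β(p) * β(μ(γ, p))⁻¹) for each arrow γ of 𝕏 and p ∈ E with π(p) = s(γ). Then 𝒞 is a categorical connection: (i) 𝒞(1_{π(p)}, p) = (1_{π(p)}, p, e_H); (ii) 𝒞(γ, p · g) = 𝒞(γ, p) · (e_H, g) for all g ∈ G; and (iii) for composable arrows γ₂, γ₁ of 𝕏 and p ∈ E with π(p) = s(γ₁), setting p₂ := μ(γ₁, p) · τ(β(p) * β(μ(γ₁, p))⁻¹)⁻¹ (the target of 𝒞(γ₁, p)), the morphisms 𝒞(γ₂, p₂) and 𝒞(γ₁, p) are composable with 𝒞(γ₂ ∘ γ₁, p) = 𝒞(γ₂, p₂) ∘ 𝒞(γ₁, p). -/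
set_option autoImplicit false

universe u v w

/-- In the decorated groupoid setting, let `β : E → H` satisfy
`β (p · g) = α (g⁻¹) (β p)` and define
`𝒞 (γ, p) := (γ, p, β p * β (μ (γ, p))⁻¹)`. Then `𝒞` is a categorical connection:
(i) `𝒞 (1_{π p}, p) = (1_{π p}, p, e_H)`;
(ii) `𝒞 (γ, p · g) = 𝒞 (γ, p) · (e_H, g)`;
(iii) for composable `γ₂, γ₁` and `p₂` the target of `𝒞 (γ₁, p)`, the morphisms
`𝒞 (γ₂, p₂)` and `𝒞 (γ₁, p)` are composable with
`𝒞 (γ₂ ∘ γ₁, p) = 𝒞 (γ₂, p₂) ∘ 𝒞 (γ₁, p)`.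
(Morphisms are triples; the `γ`- and point-components of these equalities are
definitionally equal, so only the `H`-component equalities are recorded.) -/
theorem statement18
    {G H : Type*} [Group G] [Group H]
    (τ : H →* G) (α : G →* MulAut H)
    (peiffer1 : ∀ (g : G) (h : H), τ (α g h) = g * τ h * g⁻¹)
    (peiffer2 : ∀ h h' : H, α (τ h) h' = h * h' * h⁻¹)
    {X₀ : Type u} (𝕏 : SmallGroupoid.{u, v} X₀)
    {E : Type w} (π : E → X₀)
    (act : E → G → E)
    (act_one : ∀ p : E, act p 1 = p)
    (act_mul : ∀ (p : E) (g g' : G), act (act p g) g' = act p (g * g'))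
    (π_act : ∀ (p : E) (g : G), π (act p g) = π p)
    (μ : ∀ {x y : X₀}, 𝕏.Hom x y → E → E)
    (π_μ : ∀ {x y : X₀} (γ : 𝕏.Hom x y) (p : E), π p = x → π (μ γ p) = y)
    (μ_id : ∀ (x : X₀) (p : E), π p = x → μ (𝕏.id x) p = p)
    (μ_comp : ∀ {x y z : X₀} (γ₂ : 𝕏.Hom y z) (γ₁ : 𝕏.Hom x y) (p : E),
      π p = x → μ (𝕏.comp γ₂ γ₁) p = μ γ₂ (μ γ₁ p))
    (μ_act : ∀ {x y : X₀} (γ : 𝕏.Hom x y) (p : E) (g : G),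
      π p = x → μ γ (act p g) = act (μ γ p) g)
    (β : E → H)
    (hβ : ∀ (p : E) (g : G), β (act p g) = α g⁻¹ (β p)) :
    -- (i) `𝒞 (1_x, p) = 1_p`
    (∀ (x : X₀) (p : E), π p = x →
      β p * (β (μ (𝕏.id x) p))⁻¹ = 1) ∧
    -- (ii) `𝒞 (γ, p · g) = 𝒞 (γ, p) · (e_H, g)`
    (∀ (x y : X₀) (γ : 𝕏.Hom x y) (p : E) (g : G), π p = x →
      β (act p g) * (β (μ γ (act p g)))⁻¹
        = α g⁻¹ ((1 : H)⁻¹ * (β p * (β (μ γ p))⁻¹))) ∧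
    -- (iii) `𝒞 (γ₂ ∘ γ₁, p) = 𝒞 (γ₂, p₂) ∘ 𝒞 (γ₁, p)` where `p₂ = t (𝒞 (γ₁, p))`
    (∀ (x y z : X₀) (γ₂ : 𝕏.Hom y z) (γ₁ : 𝕏.Hom x y) (p p₂ : E), π p = x →
      p₂ = act (μ γ₁ p) ((τ (β p * (β (μ γ₁ p))⁻¹))⁻¹) →
      (β p₂ * (β (μ γ₂ p₂))⁻¹) * (β p * (β (μ γ₁ p))⁻¹)
        = β p * (β (μ (𝕏.comp γ₂ γ₁) p))⁻¹) := by
  refine ⟨fun x p hp => by rw [μ_id x p hp, mul_inv_cancel],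
    fun x y γ p g hp => ?_, fun x y z γ₂ γ₁ p p₂ hp hp₂ => ?_⟩
  · rw [μ_act γ p g hp, hβ, hβ, inv_one, one_mul, map_mul, map_inv]; simp
  · have hπ1 : π (μ γ₁ p) = y := π_μ γ₁ p hp
    have h2 : β p₂ = β p * β (μ γ₁ p) * (β p)⁻¹ := by
      rw [hp₂, hβ, inv_inv, peiffer2]; group
    have h3 : β (μ γ₂ p₂) = (β p * (β (μ γ₁ p))⁻¹) * β (μ (𝕏.comp γ₂ γ₁) p)
        * (β p * (β (μ γ₁ p))⁻¹)⁻¹ := by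
      rw [hp₂, μ_act γ₂ _ _ hπ1, hβ, inv_inv, peiffer2, μ_comp γ₂ γ₁ p hp]
    rw [h2, h3]; group
end

section
/- In the equivariant-bundle setting of the context, with categorical connection 𝒞, write μ(γ, p) := t(𝒞(γ, p)) and define θ(γ, p, h) := 𝒞(γ, p) · (h⁻¹, e_G) for γ an arrow of 𝕏, p ∈ E₀ with π(p) = s(γ), and h ∈ H. Then θ is functorial and equivariant: (i) for composable arrows γ₂, γ₁ of 𝕏, p₁ ∈ E₀ with π(p₁) = s(γ₁), h₁, h₂ ∈ H, and p₂ := μ(γ₁, p₁) · τ(h₁⁻¹), the arrows θ(γ₂, p₂, h₂) and θ(γ₁, p₁, h₁) of 𝔼 are composable and θ(γ₂, p₂, h₂) ∘ θ(γ₁, p₁, h₁) = θ(γ₂ ∘ γ₁, p₁, h₂ * h₁); (ii) θ(γ, p · g, α(g⁻¹)(h'⁻¹ * h)) = θ(γ, p, h) · (h', g) for all (h', g) ∈ H ⋊_α G. -/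
set_option autoImplicit false

/-- In the equivariant-bundle setting, with categorical connection
`𝒞`, write `μ (γ, p) := t (𝒞 (γ, p))` and define `θ (γ, p, h) := 𝒞 (γ, p) · (h⁻¹, e)`.
Then `θ` is functorial and equivariant:
(i) for composable arrows `γ₂, γ₁` of `𝕏`, `p₁` with `π p₁ = s γ₁`, `h₁, h₂ ∈ H`, and
`p₂ := μ (γ₁, p₁) · τ (h₁⁻¹)`, the arrows `θ (γ₂, p₂, h₂)` and `θ (γ₁, p₁, h₁)` of `𝔼`
are composable and
`θ (γ₂, p₂, h₂) ∘ θ (γ₁, p₁, h₁) = θ (γ₂ ∘ γ₁, p₁, h₂ * h₁)`;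
(ii) `θ (γ, p · g, α (g⁻¹) (h'⁻¹ * h)) = θ (γ, p, h) · (h', g)` for `(h', g) ∈ H ⋊ G`.
Here the groupoids `𝔼 = [E₁ ⇉ E₀]` and `𝕏 = [X₁ ⇉ X₀]` are presented by their arrow
sets, with total composition maps whose axioms are imposed only on composable pairs. -/
theorem statement19
    {G H : Type*} [Group G] [Group H]
    (τ : H →* G) (α : G →* MulAut H)
    (peiffer1 : ∀ (g : G) (h : H), τ (α g h) = g * τ h * g⁻¹)
    (peiffer2 : ∀ h h' : H, α (τ h) h' = h * h' * h⁻¹)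
    -- the base groupoid 𝕏 = [X₁ ⇉ X₀]
    {X₀ X₁ : Type*}
    (sX tX : X₁ → X₀) (idX : X₀ → X₁) (compX : X₁ → X₁ → X₁)
    (hsX_id : ∀ x, sX (idX x) = x) (htX_id : ∀ x, tX (idX x) = x)
    (hsX_comp : ∀ γ₂ γ₁, sX γ₂ = tX γ₁ → sX (compX γ₂ γ₁) = sX γ₁)
    (htX_comp : ∀ γ₂ γ₁, sX γ₂ = tX γ₁ → tX (compX γ₂ γ₁) = tX γ₂)
    -- the total groupoid 𝔼 = [E₁ ⇉ E₀]
    {E₀ E₁ : Type*}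
    (sE tE : E₁ → E₀) (idE : E₀ → E₁) (compE : E₁ → E₁ → E₁)
    (hsE_id : ∀ p, sE (idE p) = p) (htE_id : ∀ p, tE (idE p) = p)
    (hsE_comp : ∀ f₂ f₁, sE f₂ = tE f₁ → sE (compE f₂ f₁) = sE f₁)
    (htE_comp : ∀ f₂ f₁, sE f₂ = tE f₁ → tE (compE f₂ f₁) = tE f₂)
    -- the bundle functor π : 𝔼 → 𝕏
    (π₀ : E₀ → X₀) (π₁ : E₁ → X₁)
    (hπ_s : ∀ f, sX (π₁ f) = π₀ (sE f)) (hπ_t : ∀ f, tX (π₁ f) = π₀ (tE f))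
    (hπ_id : ∀ p, π₁ (idE p) = idX (π₀ p))
    (hπ_comp : ∀ f₂ f₁, sE f₂ = tE f₁ → π₁ (compE f₂ f₁) = compX (π₁ f₂) (π₁ f₁))
    -- the actions of G on E₀ and of H ⋊[α] G on E₁
    (act₀ : E₀ → G → E₀) (act₁ : E₁ → (H ⋊[α] G) → E₁)
    (act₀_one : ∀ p, act₀ p 1 = p)
    (act₀_mul : ∀ p g g', act₀ (act₀ p g) g' = act₀ p (g * g'))
    (act₁_one : ∀ f, act₁ f 1 = f)
    (act₁_mul : ∀ f k k', act₁ (act₁ f k) k' = act₁ f (k * k'))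
    (hs_act : ∀ (f : E₁) (h : H) (g : G), sE (act₁ f ⟨h, g⟩) = act₀ (sE f) g)
    (ht_act : ∀ (f : E₁) (h : H) (g : G), tE (act₁ f ⟨h, g⟩) = act₀ (tE f) (τ h * g))
    (hid_act : ∀ (p : E₀) (g : G), idE (act₀ p g) = act₁ (idE p) ⟨1, g⟩)
    (hcomp_act : ∀ (f₂ f₁ : E₁) (h₂ h₁ : H) (g₂ g₁ : G),
      sE f₂ = tE f₁ → g₂ = τ h₁ * g₁ →
      compE (act₁ f₂ ⟨h₂, g₂⟩) (act₁ f₁ ⟨h₁, g₁⟩) = act₁ (compE f₂ f₁) ⟨h₂ * h₁, g₁⟩)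
    (hπ₀_act : ∀ p g, π₀ (act₀ p g) = π₀ p)
    (hπ₁_act : ∀ f k, π₁ (act₁ f k) = π₁ f)
    -- the categorical connection 𝒞
    (𝒞 : X₁ → E₀ → E₁)
    (hC_s : ∀ γ p, π₀ p = sX γ → sE (𝒞 γ p) = p)
    (hC_π : ∀ γ p, π₀ p = sX γ → π₁ (𝒞 γ p) = γ)
    (hC_comp : ∀ γ₂ γ₁ p, sX γ₂ = tX γ₁ → π₀ p = sX γ₁ →
      𝒞 (compX γ₂ γ₁) p = compE (𝒞 γ₂ (tE (𝒞 γ₁ p))) (𝒞 γ₁ p))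
    (hC_id : ∀ p, 𝒞 (idX (π₀ p)) p = idE p)
    (hC_act : ∀ γ p g, π₀ p = sX γ → 𝒞 γ (act₀ p g) = act₁ (𝒞 γ p) ⟨1, g⟩) :
    -- (i) θ is functorial, where θ (γ, p, h) := act₁ (𝒞 γ p) ⟨h⁻¹, 1⟩ and
    --     p₂ := act₀ (tE (𝒞 γ₁ p₁)) (τ h₁⁻¹)
    (∀ (γ₂ γ₁ : X₁) (p₁ : E₀) (h₂ h₁ : H), sX γ₂ = tX γ₁ → π₀ p₁ = sX γ₁ →
      sE (act₁ (𝒞 γ₂ (act₀ (tE (𝒞 γ₁ p₁)) (τ h₁⁻¹))) ⟨h₂⁻¹, 1⟩)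
          = tE (act₁ (𝒞 γ₁ p₁) ⟨h₁⁻¹, 1⟩) ∧
        compE (act₁ (𝒞 γ₂ (act₀ (tE (𝒞 γ₁ p₁)) (τ h₁⁻¹))) ⟨h₂⁻¹, 1⟩)
            (act₁ (𝒞 γ₁ p₁) ⟨h₁⁻¹, 1⟩)
          = act₁ (𝒞 (compX γ₂ γ₁) p₁) ⟨(h₂ * h₁)⁻¹, 1⟩) ∧
    -- (ii) θ is equivariant
    (∀ (γ : X₁) (p : E₀) (h h' : H) (g : G), π₀ p = sX γ →
      act₁ (𝒞 γ (act₀ p g)) ⟨(α g⁻¹ (h'⁻¹ * h))⁻¹, 1⟩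
        = act₁ (act₁ (𝒞 γ p) ⟨h⁻¹, 1⟩) ⟨h', g⟩) := by
  constructor
  · intro γ₂ γ₁ p₁ h₂ h₁ hcXX hp
    have hq : π₀ (tE (𝒞 γ₁ p₁)) = sX γ₂ := by
      rw [← hπ_t, hC_π γ₁ p₁ hp, hcXX]
    have hp2 : π₀ (act₀ (tE (𝒞 γ₁ p₁)) (τ h₁⁻¹)) = sX γ₂ := by
      rw [hπ₀_act]; exact hq
    constructor
    · rw [hs_act, hC_s _ _ hp2, ht_act, act₀_mul]
    · rw [hC_act γ₂ _ _ hq, act₁_mul]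
      have hmul : ((⟨1, τ h₁⁻¹⟩ : H ⋊[α] G) * ⟨h₂⁻¹, 1⟩)
          = (⟨α (τ h₁⁻¹) h₂⁻¹, τ h₁⁻¹⟩ : H ⋊[α] G) := by
        ext <;> simp
      rw [hmul, peiffer2]
      have hsrc : sE (𝒞 γ₂ (tE (𝒞 γ₁ p₁))) = tE (𝒞 γ₁ p₁) := hC_s _ _ hq
      rw [hcomp_act _ _ _ _ _ _ hsrc (by simp), ← hC_comp γ₂ γ₁ p₁ hcXX hp]
      congr 1
      ext
      · show h₁⁻¹ * h₂⁻¹ * (h₁⁻¹)⁻¹ * h₁⁻¹ = (h₂ * h₁)⁻¹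
        group
      · rfl
  · intro γ p h h' g hp
    rw [hC_act γ p g hp, act₁_mul, act₁_mul]
    congr 1
    ext
    · show 1 * α g (α g⁻¹ (h'⁻¹ * h))⁻¹ = h⁻¹ * α 1 h'
      simp [mul_inv_rev]
    · show g * 1 = 1 * g
      simp
end
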